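/- For every integer p ≥ 1 and all 0 ≤ m ≤ n: S^p_{n,m} = (1/m!)·Σ_{k=0}^m C(m,k)·(−1)^{m−k}·B_n^{p−1}(k). (For p = 1 this reduces to the classical formula S(n,m) = (1/m!)·Σ_{k=0}^m C(m,k)(−1)^{m−k} k^n, since B_n^0(k) = k^n.) -/

import Mathlib

/-! The alternating sum `∑ₖ C(m,k) (-1)^(m-k) f(k)` is the forward difference `Δᵐ f (0)`.
Applying the Leibniz rule `Δⁿ⁺¹ (x f) (0) = (n+1) Δⁿ f (1)` to `x^(j+1) = x · x^j` yields
the Stirling recurrence, so `Δᵐ (x^j) (0) = m! S(j,m)`. By linearity the alternating sum of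
`B_n^{p-1}` is then `m! ∑ⱼ S^{p-1}_{n,j} S(j,m) = m! S^p_{n,m}`; the last step is
`S^p = S^{p-1} S` for the powers of the Stirling matrix, which, being lower triangular, may
be truncated to the indices `≤ n`. -/

/-- Stirling numbers of the second kind. -/
def S2 : ℕ → ℕ → ℕ
  | 0, 0 => 1
  | 0, _ + 1 => 0
  | _ + 1, 0 => 0
  | n + 1, m + 1 => (m + 1) * S2 n (m + 1) + S2 n m

/-- Entries `S^p_{n,m}` of the `p`-th power of the Stirling matrix (for `p ≥ 1`;
the value at `p = 0` is junk). -/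
def Sp : ℕ → ℕ → ℕ → ℕ
  | 0, _, _ => 0
  | 1, n, m => S2 n m
  | p + 2, n, m => ∑ k ∈ Finset.range (n + 1), S2 n k * Sp (p + 1) k m

/-- Higher order Bell polynomials: `B_n^0(x) = x^n`, `B_n^p(x) = ∑_{m=0}^n S^p_{n,m} x^m`. -/
noncomputable def BellP : ℕ → ℕ → ℝ → ℝ
  | 0, n, x => x ^ n
  | p + 1, n, x => ∑ m ∈ Finset.range (n + 1), (Sp (p + 1) n m : ℝ) * x ^ m

open Finset fwdDiff

theorem S2_eq_stirlingSecond : S2 = Nat.stirlingSecond := by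
  funext n m
  induction n generalizing m with
  | zero => cases m <;> rfl
  | succ n ih =>
    cases m <;> simp only [S2, Nat.stirlingSecond_succ_succ, Nat.stirlingSecond_succ_zero, ih]

section fwdDiff

variable {R : Type*} [CommRing R]

theorem sum_choose_mul_neg_one_pow_mul_eq_fwdDiff_iter (f : R → R) (m : ℕ) :
    ∑ k ∈ range (m + 1), (m.choose k : R) * (-1) ^ (m - k) * f k = Δ_[1] ^[m] f 0 := by
  rw [fwdDiff_iter_eq_sum_shift]
  refine sum_congr rfl fun k _ => ?_
  simp only [zsmul_eq_mul, nsmul_one, zero_add]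
  push_cast
  ring

theorem fwdDiff_iter_id_mul (f : R → R) (n : ℕ) (y : R) :
    Δ_[1] ^[n + 1] (fun x => x * f x) y =
      y * Δ_[1] ^[n + 1] f y + (n + 1) * Δ_[1] ^[n] f (y + 1) := by
  induction n generalizing y with
  | zero =>
    simp only [zero_add, Function.iterate_one, Function.iterate_zero, id, fwdDiff]
    push_cast
    ring
  | succ n ih =>
    rw [Function.iterate_succ_apply', funext ih]
    simp only [fwdDiff, Function.iterate_succ_apply']
    push_cast
    ring

theorem fwdDiff_iter_pow_apply_zero (j m : ℕ) :
    Δ_[1] ^[m] (fun x : R => x ^ j) 0 = (m.factorial * Nat.stirlingSecond j m : ℕ) := by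
  induction j generalizing m with
  | zero =>
    cases m with
    | zero => simp
    | succ m => simp only [fwdDiff_iter_pow_eq_zero_of_lt m.succ_pos, Pi.zero_apply,
        Nat.stirlingSecond_zero_succ, mul_zero, Nat.cast_zero]
  | succ j ih =>
    cases m with
    | zero => simp
    | succ m =>
      have hshift : Δ_[1] ^[m] (fun x : R => x ^ j) (0 + 1) =
          Δ_[1] ^[m] (fun x : R => x ^ j) 0 + Δ_[1] ^[m + 1] (fun x : R => x ^ j) 0 := by
        rw [Function.iterate_succ_apply', fwdDiff]; ring
      simp_rw [pow_succ' _ j]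
      rw [fwdDiff_iter_id_mul, hshift, ih, ih, Nat.stirlingSecond_succ_succ, Nat.factorial_succ]
      push_cast
      ring

theorem fwdDiff_iter_sum_mul_pow_apply_zero (s : Finset ℕ) (c : ℕ → R) (m : ℕ) :
    Δ_[1] ^[m] (fun x : R => ∑ j ∈ s, c j * x ^ j) 0 =
      ∑ j ∈ s, c j * (m.factorial * Nat.stirlingSecond j m : ℕ) := by
  simp_rw [← sum_apply _ _ (fun j x ↦ c j * x ^ j), fwdDiff_iter_finsetSum, Finset.sum_apply,
    ← smul_eq_mul, ← Pi.smul_def, fwdDiff_iter_const_smul, Pi.smul_apply,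
    fwdDiff_iter_pow_apply_zero, smul_eq_mul]

end fwdDiff

def stirlingMatrix (N : ℕ) : Matrix (Fin N) (Fin N) ℕ :=
  Matrix.of fun i j => Nat.stirlingSecond i j

theorem Sp_succ_eq_stirlingMatrix_pow_apply (p : ℕ) {N : ℕ} (i j : Fin N) :
    Sp (p + 1) i j = (stirlingMatrix N ^ (p + 1)) i j := by
  induction p generalizing i j with
  | zero => simp [Sp, stirlingMatrix, S2_eq_stirlingSecond]
  | succ p ih =>
    have htrunc : ∑ k ∈ range (i + 1), Nat.stirlingSecond i k * Sp (p + 1) k j =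
        ∑ k ∈ range N, Nat.stirlingSecond i k * Sp (p + 1) k j := by
      refine sum_subset (range_subset_range.2 i.isLt) fun k _ hk => ?_
      rw [Nat.stirlingSecond_eq_zero_of_lt (by simpa using hk), zero_mul]
    rw [pow_succ', Matrix.mul_apply]
    change ∑ k ∈ range (i + 1), S2 i k * Sp (p + 1) k j = _
    rw [S2_eq_stirlingSecond, htrunc,
      ← Fin.sum_univ_eq_sum_range (fun k => Nat.stirlingSecond i k * Sp (p + 1) k j)]
    exact sum_congr rfl fun k _ => by rw [ih]; rfl

theorem Sp_succ_succ_eq_sum_Sp_mul_stirlingSecond (p : ℕ) {n m : ℕ} (hm : m ≤ n) :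
    Sp (p + 2) n m = ∑ j ∈ range (n + 1), Sp (p + 1) n j * Nat.stirlingSecond j m := by
  have h := Sp_succ_eq_stirlingMatrix_pow_apply (p + 1) (⟨n, n.lt_succ_self⟩ : Fin (n + 1))
    ⟨m, Nat.lt_succ_of_le hm⟩
  rw [pow_succ, Matrix.mul_apply] at h
  simp only [← Sp_succ_eq_stirlingMatrix_pow_apply] at h
  rw [h, ← Fin.sum_univ_eq_sum_range (fun j => Sp (p + 1) n j * Nat.stirlingSecond j m)]
  rfl

theorem factorial_mul_Sp_succ_eq_fwdDiff_iter_BellP (p : ℕ) {n m : ℕ} (hm : m ≤ n) :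
    (m.factorial * Sp (p + 1) n m : ℝ) = Δ_[1] ^[m] (BellP p n) 0 := by
  cases p with
  | zero =>
    rw [show BellP 0 n = fun x => x ^ n from rfl, fwdDiff_iter_pow_apply_zero]
    simp [Sp, S2_eq_stirlingSecond]
  | succ p =>
    rw [show BellP (p + 1) n = fun x => ∑ j ∈ range (n + 1), (Sp (p + 1) n j : ℝ) * x ^ j
      from rfl, fwdDiff_iter_sum_mul_pow_apply_zero, Sp_succ_succ_eq_sum_Sp_mul_stirlingSecond p hm]
    push_cast
    rw [mul_sum]
    exact sum_congr rfl fun j _ => by ring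

/-- `S^p_{n,m} = (1/m!) ∑_{k=0}^m C(m,k) (-1)^{m-k} B_n^{p-1}(k)`. -/
theorem stirling_power_eq_bell_sum (p n m : ℕ) (hp : 1 ≤ p) (hm : m ≤ n) :
    (Sp p n m : ℝ) =
      (1 / m.factorial) *
        ∑ k ∈ Finset.range (m + 1),
          (m.choose k : ℝ) * (-1 : ℝ) ^ (m - k) * BellP (p - 1) n (k : ℝ) := by
  obtain ⟨q, rfl⟩ := Nat.exists_eq_add_of_le' hp
  rw [Nat.add_sub_cancel, sum_choose_mul_neg_one_pow_mul_eq_fwdDiff_iter,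
    ← factorial_mul_Sp_succ_eq_fwdDiff_iter_BellP q hm]
  field_simp
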